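/- arXiv:2512.23249 — 3 statements merged into one kernel-verified Lean document; each statement's English description precedes it below -/
import Mathlib

section
/- Let I : M × N → ℝ with d_{I,M}(x,y) = sup_{z∈N}(I(x,z) − I(y,z)) finite, (M, d^sym_{I,M}) separable, and let L(N) ⊆ Lip¹_b(M, d^sym_{I,M}) be the image of the horofunction map z ↦ (x ↦ I(x,z) − I(b,z)). Then for any x, y ∈ M the supremum defining d_{I,M}(x,y) is attained at some element of the closure of L(N) in the pointwise-convergence topology: there exists h in the closure of L(N) with d_{I,M}(x,y) = h(x) − h(y). -/
/-! Every horofunction `w ↦ I(w,z) - I(b,z)` lies in the pointwise box `-d(b,w) ≤ h(w) ≤ d(w,b)`,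
which is compact by Tychonoff, so the closure of the horofunctions is compact. The functional
`h ↦ h(x) - h(y)` is continuous for pointwise convergence and takes the value `I(x,z) - I(y,z)`
at the horofunction of `z`; its maximum over the compact closure is therefore the supremum
`d(x,y)`. -/

open Set

theorem IsCompact.exists_mem_closure_range_ciSup_eq {X ι : Type*} [TopologicalSpace X]
    [Nonempty ι] {f : ι → X} (hf : IsCompact (closure (range f))) {φ : X → ℝ}
    (hφ : Continuous φ) : ∃ h ∈ closure (range f), ⨆ i, φ (f i) = φ h := by
  obtain ⟨h, hh, hmax⟩ :=
    hf.exists_isMaxOn (range_nonempty f).closure hφ.continuousOn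
  have hle : ∀ i, φ (f i) ≤ φ h := fun i => hmax (subset_closure (mem_range_self i))
  have hbdd : BddAbove (range fun i => φ (f i)) := ⟨φ h, forall_mem_range.2 hle⟩
  have hclosure : closure (range f) ⊆ {u | φ u ≤ ⨆ i, φ (f i)} :=
    closure_minimal (forall_mem_range.2 fun i => le_ciSup hbdd i)
      (isClosed_le hφ continuous_const)
  exact ⟨h, hh, le_antisymm (ciSup_le hle) (hclosure hh)⟩

section Horofunction

variable {M N : Type*}

def horofunction (I : M → N → ℝ) (b : M) (z : N) : M → ℝ := fun w => I w z - I b z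

theorem horofunction_sub_horofunction (I : M → N → ℝ) (b : M) (z : N) (x y : M) :
    horofunction I b z x - horofunction I b z y = I x z - I y z := by
  simp only [horofunction]
  ring

theorem range_horofunction_subset_Icc (I : M → N → ℝ) (b : M)
    (hbdd : ∀ x y : M, BddAbove (range fun z => I x z - I y z)) :
    range (horofunction I b) ⊆
      Icc (fun w => -⨆ z, (I b z - I w z)) (fun w => ⨆ z, (I w z - I b z)) := by
  rintro _ ⟨z, rfl⟩
  refine ⟨fun w => ?_, fun w => le_ciSup (hbdd w b) z⟩
  have := le_ciSup (hbdd b w) z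
  simp only [horofunction]
  linarith

theorem isCompact_closure_range_horofunction (I : M → N → ℝ) (b : M)
    (hbdd : ∀ x y : M, BddAbove (range fun z => I x z - I y z)) :
    IsCompact (closure (range (horofunction I b))) :=
  isCompact_Icc.closure_of_subset (range_horofunction_subset_Icc I b hbdd)

end Horofunction

theorem stmt_9_general {M N : Type*} [Nonempty N] (I : M → N → ℝ) (b : M)
    (hbdd : ∀ x y : M, BddAbove (Set.range fun z => I x z - I y z)) :
    ∀ x y : M, ∃ h ∈ closure (Set.range fun z : N => fun w : M => I w z - I b z),
      (⨆ z : N, (I x z - I y z)) = h x - h y := by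
  intro x y
  obtain ⟨h, hh, hsup⟩ :=
    (isCompact_closure_range_horofunction I b hbdd).exists_mem_closure_range_ciSup_eq
      (φ := fun u : M → ℝ => u x - u y) (by fun_prop)
  simp only [horofunction_sub_horofunction] at hsup
  exact ⟨h, hh, hsup⟩

/-- The supremum defining `d_{I,M}(x,y)` is attained at some
element of the closure (pointwise-convergence topology) of the image of the
horofunction map `z ↦ (w ↦ I(w,z) - I(b,z))`. -/
theorem stmt_9 {M N : Type*} [Nonempty M] [Nonempty N] (I : M → N → ℝ) (b : M)
    (hbdd : ∀ x y : M, BddAbove (Set.range fun z => I x z - I y z))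
    (D : Set M) (hDcount : D.Countable)
    (hDdense : ∀ x : M, ∀ ε > (0 : ℝ), ∃ y ∈ D,
      max (⨆ z : N, (I x z - I y z)) (⨆ z : N, (I y z - I x z)) < ε) :
    ∀ x y : M, ∃ h ∈ closure (Set.range fun z : N => fun w : M => I w z - I b z),
      (⨆ z : N, (I x z - I y z)) = h x - h y :=
  stmt_9_general I b hbdd
end

section
/- Let X be a compact metrizable space, g : X → X a homeomorphism, b a point of a set M on which g acts, and suppose each h ∈ X is a real-valued function on M with h(b) = 0 such that the cocycle identity h(g⁻ⁿb) = Σ_{i=0}^{n−1}(gⁱ·h)(g⁻¹b) holds, where the action of g on X is (g·h)(x) = h(g⁻¹x) − h(g⁻¹b) and evaluation h ↦ h(g⁻¹b) is continuous on X. If g has north–south dynamics on X with attracting fixed point h₊ and repelling fixed point h₋ (i.e., gⁿ·h → h₊ for all h ≠ h₋ and g⁻ⁿ·h → h₋ for all h ≠ h₊), then for every h ≠ h₋ in X, lim_{n→∞} (1/n) h(g⁻ⁿ·b) = h₊(g⁻¹·b). -/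
/-- The twisted action of `G` on functions `M → ℝ` relative to a basepoint `b`:
`(g · h)(x) = h(g⁻¹ • x) - h(g⁻¹ • b)`. -/
def horoAction {G M : Type*} [Group G] [MulAction G M] (b : M)
    (g : G) (h : M → ℝ) : M → ℝ :=
  fun x => h (g⁻¹ • x) - h (g⁻¹ • b)

/-! Telescoping turns `h(g⁻ⁿ b)` into the `n`-th partial sum of the sequence `(gⁱ · h)(g⁻¹ b)`,
which converges to `h₊(g⁻¹ b)` by north–south dynamics; the Cesàro means of a convergent
sequence converge to the same limit. -/

open Filter Topology Finset

section Horofunction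

variable {G M : Type*} [Group G] [MulAction G M] (b : M) (g : G) (h : M → ℝ)

theorem horoAction_pow_apply_inv_smul (i : ℕ) :
    horoAction b (g ^ i) h (g⁻¹ • b) = h ((g ^ (i + 1))⁻¹ • b) - h ((g ^ i)⁻¹ • b) := by
  rw [horoAction, smul_smul, ← mul_inv_rev, ← pow_succ']

theorem sum_range_horoAction_pow_apply_inv_smul (n : ℕ) :
    ∑ i ∈ range n, horoAction b (g ^ i) h (g⁻¹ • b) = h ((g ^ n)⁻¹ • b) - h b := by
  simp only [horoAction_pow_apply_inv_smul]
  simpa using sum_range_sub (fun i => h ((g ^ i)⁻¹ • b)) n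

theorem tendsto_apply_inv_pow_smul_div_of_tendsto_horoAction {h' : M → ℝ} (hb : h b = 0)
    (hlim : Tendsto (fun n : ℕ => horoAction b (g ^ n) h) atTop (𝓝 h')) :
    Tendsto (fun n : ℕ => h ((g ^ n)⁻¹ • b) / n) atTop (𝓝 (h' (g⁻¹ • b))) := by
  have hcesaro := ((continuous_apply (g⁻¹ • b)).tendsto h' |>.comp hlim).cesaro
  simpa only [Function.comp_def, sum_range_horoAction_pow_apply_inv_smul, hb, sub_zero,
    div_eq_inv_mul] using hcesaro

end Horofunction

theorem stmt_13_general {G M : Type*} [Group G] [MulAction G M] (b : M) (g : G)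
    (X : Set (M → ℝ))
    (hXzero : ∀ h ∈ X, h b = 0)
    (hplus hminus : M → ℝ)
    (hNSplus : ∀ h ∈ X, h ≠ hminus →
      Filter.Tendsto (fun n : ℕ => horoAction b (g ^ n) h) Filter.atTop (nhds hplus)) :
    ∀ h ∈ X, h ≠ hminus →
      Filter.Tendsto (fun n : ℕ => h ((g ^ n)⁻¹ • b) / n) Filter.atTop
        (nhds (hplus (g⁻¹ • b))) := fun h hX hne =>
  tendsto_apply_inv_pow_smul_div_of_tendsto_horoAction b g h (hXzero h hX) (hNSplus h hX hne)

/-- if `g` has north–south dynamics on a compact invariant set `X`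
of horofunctions (functions vanishing at `b`, with pointwise convergence
topology), with attracting fixed point `h₊` and repelling fixed point `h₋`,
then for every `h ∈ X` with `h ≠ h₋` we have
`lim (1/n) h(g⁻ⁿ·b) = h₊(g⁻¹·b)`. -/
theorem stmt_13 {G M : Type*} [Group G] [MulAction G M] (b : M) (g : G)
    (X : Set (M → ℝ)) (hXcompact : IsCompact X)
    (hXzero : ∀ h ∈ X, h b = 0)
    (hXinv : ∀ h ∈ X, horoAction b g h ∈ X ∧ horoAction b g⁻¹ h ∈ X)
    (hplus hminus : M → ℝ) (hplusX : hplus ∈ X) (hminusX : hminus ∈ X)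
    (hne : hplus ≠ hminus)
    (hfixplus : horoAction b g hplus = hplus)
    (hfixminus : horoAction b g hminus = hminus)
    (hNSplus : ∀ h ∈ X, h ≠ hminus →
      Filter.Tendsto (fun n : ℕ => horoAction b (g ^ n) h) Filter.atTop (nhds hplus))
    (hNSminus : ∀ h ∈ X, h ≠ hplus →
      Filter.Tendsto (fun n : ℕ => horoAction b (g⁻¹ ^ n) h) Filter.atTop (nhds hminus)) :
    ∀ h ∈ X, h ≠ hminus →
      Filter.Tendsto (fun n : ℕ => h ((g ^ n)⁻¹ • b) / n) Filter.atTop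
        (nhds (hplus (g⁻¹ • b))) :=
  stmt_13_general b g X hXzero hplus hminus hNSplus
end

section
/- Let ℍ = {x + iy : y > 0} be the upper half-plane with its hyperbolic metric d_ℍ. Define I : ℍ × ℝ → ℝ by I(x + iy, t) = log(y + (t + x)²/y). Then for all z, w ∈ ℍ: d_ℍ(z, w) = sup_{t ∈ ℝ} (I(z,t) − I(w,t)). -/
/-!
Write `I(z, t) = log (horo z t)` and let `E = exp d(z, w)`, `a = Im z`, `b = Im w`. The formula
for `cosh d` says that `E` is a root of `a b (X² + 1) = X ((Re z - Re w)² + a² + b²)`, and this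
makes `(E a - b) a b (E horo w t - horo z t)` a perfect square in `t`. Since `b ≤ E a`, this gives
`horo z ≤ E horo w` everywhere, with equality at the root of the square when `b < E a`. In the
remaining case `E a = b`, the points `z` and `w` lie on a common vertical line and the supremum
`log (b / a)` is only approached as `t → ∞`.
-/

open Real Filter Topology

namespace UpperHalfPlane

noncomputable def horo (z : ℍ) (t : ℝ) : ℝ := z.im + (t + z.re) ^ 2 / z.im

theorem horo_pos (z : ℍ) (t : ℝ) : 0 < horo z t := by
  have := z.im_pos
  unfold horo
  positivity

theorem exp_dist_quadratic (z w : ℍ) :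
    z.im * w.im * (exp (dist z w) ^ 2 + 1) =
      exp (dist z w) * ((z.re - w.re) ^ 2 + z.im ^ 2 + w.im ^ 2) := by
  have h := cosh_dist' z w
  have := z.im_pos
  have := w.im_pos
  rw [Real.cosh_eq, Real.exp_neg] at h
  field_simp at h
  linear_combination h

theorem im_le_exp_dist_mul_im (z w : ℍ) : w.im ≤ exp (dist z w) * z.im := by
  rw [dist_comm, mul_comm]
  exact im_le_im_mul_exp_dist w z

theorem re_eq_of_exp_dist_mul_im_eq {z w : ℍ} (h : exp (dist z w) * z.im = w.im) :
    z.re = w.re := by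
  have hsq : exp (dist z w) * (z.re - w.re) ^ 2 = 0 := by
    linear_combination (exp (dist z w) * w.im - z.im) * h - exp_dist_quadratic z w
  have := (mul_eq_zero.1 hsq).resolve_left (exp_pos _).ne'
  exact sub_eq_zero.1 (pow_eq_zero_iff two_ne_zero |>.1 this)

theorem sub_mul_exp_dist_mul_horo_sub_horo (z w : ℍ) (t : ℝ) :
    (exp (dist z w) * z.im - w.im) * (z.im * w.im) *
        (exp (dist z w) * horo w t - horo z t) =
      ((exp (dist z w) * z.im - w.im) * t + (exp (dist z w) * z.im * w.re - w.im * z.re)) ^ 2 := by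
  have := z.im_pos.ne'
  have := w.im_pos.ne'
  unfold horo
  field_simp
  linear_combination (z.im * w.im) * exp_dist_quadratic z w

theorem horo_le_exp_dist_mul_horo (z w : ℍ) (t : ℝ) : horo z t ≤ exp (dist z w) * horo w t := by
  have ha := z.im_pos
  rcases (im_le_exp_dist_mul_im z w).lt_or_eq with hlt | heq
  · have hpos : 0 < (exp (dist z w) * z.im - w.im) * (z.im * w.im) :=
      mul_pos (sub_pos.2 hlt) (mul_pos ha w.im_pos)
    have hsq := (sub_mul_exp_dist_mul_horo_sub_horo z w t).symm ▸ sq_nonneg _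
    exact sub_nonneg.1 ((mul_nonneg_iff_of_pos_left hpos).1 hsq)
  · have hE : 1 ≤ exp (dist z w) := one_le_exp dist_nonneg
    rw [horo, horo, ← re_eq_of_exp_dist_mul_im_eq heq.symm, heq]
    field_simp
    nlinarith [mul_le_mul_of_nonneg_left (one_le_pow₀ hE : 1 ≤ exp (dist z w) ^ 2) (sq_nonneg z.im)]

theorem log_horo_sub_log_horo_le_dist (z w : ℍ) (t : ℝ) :
    log (horo z t) - log (horo w t) ≤ dist z w := by
  have h := log_le_log (horo_pos z t) (horo_le_exp_dist_mul_horo z w t)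
  rw [log_mul (exp_pos _).ne' (horo_pos w t).ne', log_exp] at h
  linarith

theorem exists_log_horo_sub_log_horo_eq_dist {z w : ℍ} (h : w.im < exp (dist z w) * z.im) :
    ∃ t, log (horo z t) - log (horo w t) = dist z w := by
  have hden : exp (dist z w) * z.im - w.im ≠ 0 := sub_ne_zero.2 h.ne'
  set t₀ := (w.im * z.re - exp (dist z w) * z.im * w.re) / (exp (dist z w) * z.im - w.im)
  have hgap := sub_mul_exp_dist_mul_horo_sub_horo z w t₀
  rw [mul_div_cancel₀ _ hden, show ∀ u v : ℝ, u - v + (v - u) = 0 by intros; ring,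
    zero_pow two_ne_zero] at hgap
  have hne : (exp (dist z w) * z.im - w.im) * (z.im * w.im) ≠ 0 :=
    mul_ne_zero hden (mul_ne_zero z.im_pos.ne' w.im_pos.ne')
  have heq : horo z t₀ = exp (dist z w) * horo w t₀ :=
    (sub_eq_zero.1 ((mul_eq_zero.1 hgap).resolve_left hne)).symm
  refine ⟨t₀, ?_⟩
  rw [heq, log_mul (exp_pos _).ne' (horo_pos w t₀).ne', log_exp]
  ring

theorem tendsto_horo_div_sq (z : ℍ) :
    Tendsto (fun t => horo z t / t ^ 2) atTop (𝓝 z.im⁻¹) := by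
  have ha := z.im_pos.ne'
  have hcont : Continuous fun u : ℝ => z.im * u ^ 2 + (1 + z.re * u) ^ 2 / z.im := by fun_prop
  have hlim := (hcont.tendsto 0).comp tendsto_inv_atTop_zero
  rw [Function.comp_def, show z.im * 0 ^ 2 + (1 + z.re * 0) ^ 2 / z.im = z.im⁻¹ by simp] at hlim
  refine hlim.congr' ?_
  filter_upwards [eventually_ne_atTop 0] with t ht
  unfold horo
  field_simp

theorem tendsto_log_horo_sub_log_horo (z w : ℍ) :
    Tendsto (fun t => log (horo z t) - log (horo w t)) atTop (𝓝 (log w.im - log z.im)) := by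
  have hlim := ((tendsto_horo_div_sq z).log (inv_ne_zero z.im_pos.ne')).sub
    ((tendsto_horo_div_sq w).log (inv_ne_zero w.im_pos.ne'))
  rw [log_inv, log_inv, neg_sub_neg] at hlim
  refine hlim.congr' ?_
  filter_upwards [eventually_ne_atTop 0] with t ht
  rw [log_div (horo_pos z t).ne' (pow_ne_zero 2 ht), log_div (horo_pos w t).ne' (pow_ne_zero 2 ht)]
  ring

theorem dist_eq_log_im_sub_log_im {z w : ℍ} (h : w.im = exp (dist z w) * z.im) :
    dist z w = log w.im - log z.im := by
  rw [h, log_mul (exp_pos _).ne' z.im_pos.ne', log_exp]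
  ring

end UpperHalfPlane

open UpperHalfPlane

/-- Minsky: on the hyperbolic upper half-plane, with
`I(x + iy, t) = log (y + (t + x)² / y)`, one recovers the hyperbolic distance:
`d_ℍ(z, w) = sup_{t ∈ ℝ} (I(z,t) - I(w,t))`. -/
theorem stmt_18 (z w : UpperHalfPlane) :
    dist z w =
      ⨆ t : ℝ, (Real.log (z.im + (t + z.re) ^ 2 / z.im) -
                Real.log (w.im + (t + w.re) ^ 2 / w.im)) := by
  have hle : ∀ t, log (horo z t) - log (horo w t) ≤ dist z w := log_horo_sub_log_horo_le_dist z w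
  have hbdd : BddAbove (Set.range fun t => log (horo z t) - log (horo w t)) :=
    ⟨dist z w, Set.forall_mem_range.2 hle⟩
  refine le_antisymm ?_ (ciSup_le hle)
  rcases (im_le_exp_dist_mul_im z w).lt_or_eq with hlt | heq
  · obtain ⟨t, ht⟩ := exists_log_horo_sub_log_horo_eq_dist hlt
    exact ht.symm.le.trans (le_ciSup hbdd t)
  · rw [dist_eq_log_im_sub_log_im heq]
    exact le_of_tendsto (tendsto_log_horo_sub_log_horo z w)
      (Eventually.of_forall fun t => le_ciSup hbdd t)
end
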